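/- Let B ∈ ℝ^{m×m} be symmetric PSD with compact SVD B = UΣUᵀ, σ₁(Σ) = 1, rank(B) = r_B. Let X ∈ St(m,r) with r ≥ r_B, Θ = XᵀBX, and G = −(I_m − XXᵀ)BXXᵀBX. With Φ = UᵀX, it holds that GᵀG = Θ Φᵀ Σ (I_{r_B} − ΦΦᵀ) Σ Φ Θ and σ₁(GᵀG) ≤ σ₁(I_{r_B} − ΦΦᵀ). -/

import Mathlib

/-!
Since `1 - XXᵀ` is a symmetric idempotent and `B = USUᵀ` is symmetric,
`GᵀG = Θ (Xᵀ B (1 - XXᵀ) B X) Θ`, and `Uᵀ (1 - XXᵀ) U = 1 - ΦΦᵀ` turns the middle factor into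
`Φᵀ S (1 - ΦΦᵀ) S Φ`. For the bound, `specNorm` is the ℓ²-operator norm (the largest eigenvalue
of the positive semidefinite `MᵀM` is `‖MᵀM‖ = ‖M‖²`), which is submultiplicative, and
`S`, `Φ`, `Φᵀ` and `Θ = Φᵀ S Φ` are contractions.
-/

open Matrix

noncomputable def specNorm {a b : ℕ} (M : Matrix (Fin a) (Fin b) ℝ) : ℝ :=
  Real.sqrt (sSup {e : ℝ | Module.End.HasEigenvalue (Matrix.toLin' (Mᵀ * M)) e})

open scoped Matrix.Norms.L2Operator

namespace Matrix

variable {𝕜 : Type*} [RCLike 𝕜] {l m n : Type*} [Fintype l] [Fintype m] [Fintype n]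
  [DecidableEq l] [DecidableEq n]

theorem setOf_hasEigenvalue_toLin'_eq_spectrum {K : Type*} [Field K] (A : Matrix n n K) :
    {e : K | Module.End.HasEigenvalue (toLin' A) e} = spectrum K A := by
  ext e
  rw [Set.mem_ofPred_eq, Module.End.hasEigenvalue_iff_mem_spectrum, spectrum_toLin']

theorem PosSemidef.sSup_spectrum_eq_l2_opNorm {A : Matrix n n ℝ} (hA : A.PosSemidef) :
    sSup (spectrum ℝ A) = ‖A‖ := by
  cases subsingleton_or_nontrivial (Matrix n n ℝ) with
  | inl _ => simp [spectrum.of_subsingleton, Subsingleton.elim A 0]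
  | inr _ =>
    have hnonneg : ∀ x ∈ spectrum ℝ A, 0 ≤ x := by
      rw [hA.isHermitian.spectrum_real_eq_range_eigenvalues]
      rintro _ ⟨i, rfl⟩
      exact hA.eigenvalues_nonneg i
    have hgreat := IsGreatest.norm_cfc (𝕜 := ℝ) id A (ha := hA.isHermitian.isSelfAdjoint)
    rw [cfc_id ℝ A hA.isHermitian.isSelfAdjoint] at hgreat
    simp only [id] at hgreat
    rw [Set.image_congr fun x hx => Real.norm_of_nonneg (hnonneg x hx), Set.image_id'] at hgreat
    exact hgreat.csSup_eq

theorem l2_opNorm_one_le : ‖(1 : Matrix n n 𝕜)‖ ≤ 1 := by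
  rw [← diagonal_one, l2_opNorm_diagonal]
  exact (pi_norm_le_iff_of_nonneg zero_le_one).2 fun _ => norm_one.le

theorem l2_opNorm_le_one_of_conjTranspose_mul_self_eq_one {A : Matrix m n 𝕜}
    (hA : Aᴴ * A = 1) : ‖A‖ ≤ 1 := by
  have h := l2_opNorm_conjTranspose_mul_self A
  rw [hA] at h
  nlinarith [l2_opNorm_one_le (n := n) (𝕜 := 𝕜), norm_nonneg A]

theorem l2_opNorm_le_one_of_transpose_mul_self_eq_one {A : Matrix m n ℝ} (hA : Aᵀ * A = 1) :
    ‖A‖ ≤ 1 :=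
  l2_opNorm_le_one_of_conjTranspose_mul_self_eq_one (by rwa [conjTranspose_eq_transpose_of_trivial])

theorem l2_opNorm_transpose [DecidableEq m] (A : Matrix m n ℝ) : ‖Aᵀ‖ = ‖A‖ := by
  rw [← conjTranspose_eq_transpose_of_trivial, l2_opNorm_conjTranspose]

theorem l2_opNorm_mul_le_one {A : Matrix m n 𝕜} {B : Matrix n l 𝕜} (hA : ‖A‖ ≤ 1)
    (hB : ‖B‖ ≤ 1) : ‖A * B‖ ≤ 1 :=
  (l2_opNorm_mul A B).trans (mul_le_one₀ hA (norm_nonneg B) hB)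

theorem l2_opNorm_mul_mul_le {k : Type*} [Fintype k] [DecidableEq k] {A : Matrix m n 𝕜}
    (B : Matrix n l 𝕜) {C : Matrix l k 𝕜} (hA : ‖A‖ ≤ 1) (hC : ‖C‖ ≤ 1) :
    ‖A * B * C‖ ≤ ‖B‖ :=
  calc ‖A * B * C‖ ≤ ‖A‖ * ‖B‖ * ‖C‖ := by grw [l2_opNorm_mul, l2_opNorm_mul]
    _ ≤ 1 * ‖B‖ * 1 := by gcongr
    _ = ‖B‖ := by ring

end Matrix

theorem specNorm_eq_l2_opNorm {a b : ℕ} (M : Matrix (Fin a) (Fin b) ℝ) : specNorm M = ‖M‖ := by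
  rw [specNorm, setOf_hasEigenvalue_toLin'_eq_spectrum, ← conjTranspose_eq_transpose_of_trivial,
    (posSemidef_conjTranspose_mul_self M).sSup_spectrum_eq_l2_opNorm,
    l2_opNorm_conjTranspose_mul_self, Real.sqrt_mul_self (norm_nonneg M)]

namespace Matrix

variable {R : Type*} [CommRing R] {k m r : Type*} [Fintype m] [DecidableEq m] [Fintype r]

theorem transpose_one_sub_mul_transpose_mul_self [DecidableEq r] {X : Matrix m r R}
    (hX : Xᵀ * X = 1) : (1 - X * Xᵀ)ᵀ * (1 - X * Xᵀ) = 1 - X * Xᵀ := by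
  have hidem : X * Xᵀ * (X * Xᵀ) = X * Xᵀ := by
    rw [Matrix.mul_assoc, ← Matrix.mul_assoc Xᵀ, hX, Matrix.one_mul]
  rw [transpose_sub, transpose_one, transpose_mul, transpose_transpose, Matrix.sub_mul,
    Matrix.one_mul, Matrix.mul_sub, Matrix.mul_one, hidem, sub_self, sub_zero]

theorem transpose_mul_one_sub_mul_transpose_mul [DecidableEq k] {U : Matrix m k R}
    (hU : Uᵀ * U = 1) (X : Matrix m r R) :
    Uᵀ * (1 - X * Xᵀ) * U = 1 - (Uᵀ * X) * (Uᵀ * X)ᵀ := by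
  rw [Matrix.mul_sub, Matrix.sub_mul, Matrix.mul_one, hU, transpose_mul, transpose_transpose]
  simp only [Matrix.mul_assoc]

theorem transpose_mul_self_of_eq_neg_one_sub_mul_transpose [DecidableEq r] {B : Matrix m m R}
    (hB : Bᵀ = B) {X : Matrix m r R} (hX : Xᵀ * X = 1) {G : Matrix m r R}
    (hG : G = -((1 - X * Xᵀ) * B * X * Xᵀ * B * X)) :
    Gᵀ * G = (Xᵀ * B * X) * (Xᵀ * B * (1 - X * Xᵀ) * B * X) * (Xᵀ * B * X) := by
  have hG' : G = -((1 - X * Xᵀ) * (B * X * (Xᵀ * B * X))) := by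
    simp only [hG, Matrix.mul_assoc]
  calc Gᵀ * G
      = (Xᵀ * B * X * Xᵀ * B) * ((1 - X * Xᵀ)ᵀ * (1 - X * Xᵀ)) * (B * X * (Xᵀ * B * X)) := by
        simp only [hG', transpose_neg, transpose_mul, transpose_transpose, hB, Matrix.neg_mul,
          Matrix.mul_neg, neg_neg, Matrix.mul_assoc]
    _ = (Xᵀ * B * X) * (Xᵀ * B * (1 - X * Xᵀ) * B * X) * (Xᵀ * B * X) := by
        rw [transpose_one_sub_mul_transpose_mul_self hX]
        simp only [Matrix.mul_assoc]

theorem transpose_mul_sandwich_one_sub_mul_transpose [Fintype k] [DecidableEq k]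
    {U : Matrix m k R} (hU : Uᵀ * U = 1) (S : Matrix k k R) (X : Matrix m r R) :
    Xᵀ * (U * S * Uᵀ) * (1 - X * Xᵀ) * (U * S * Uᵀ) * X
      = (Uᵀ * X)ᵀ * S * (1 - (Uᵀ * X) * (Uᵀ * X)ᵀ) * S * (Uᵀ * X) := by
  rw [← transpose_mul_one_sub_mul_transpose_mul hU, transpose_mul, transpose_transpose]
  simp only [Matrix.mul_assoc]

end Matrix

theorem symmetric_grad_identity_and_bound_general {m r rB : ℕ}
    (U : Matrix (Fin m) (Fin rB) ℝ) (hU : Uᵀ * U = 1)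
    (S : Matrix (Fin rB) (Fin rB) ℝ) (hSd : S.IsDiag)
    (hS1 : specNorm S = 1)
    (B : Matrix (Fin m) (Fin m) ℝ) (hB : B = U * S * Uᵀ)
    (X : Matrix (Fin m) (Fin r) ℝ) (hX : Xᵀ * X = 1)
    (Θ : Matrix (Fin r) (Fin r) ℝ) (hΘ : Θ = Xᵀ * B * X)
    (G : Matrix (Fin m) (Fin r) ℝ) (hG : G = -((1 - X * Xᵀ) * B * X * Xᵀ * B * X)) :
    Gᵀ * G = Θ * (Uᵀ * X)ᵀ * S * (1 - (Uᵀ * X) * (Uᵀ * X)ᵀ) * S * (Uᵀ * X) * Θ ∧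
      specNorm (Gᵀ * G) ≤ specNorm (1 - (Uᵀ * X) * (Uᵀ * X)ᵀ) := by
  have hBsymm : Bᵀ = B := by
    rw [hB, transpose_mul, transpose_mul, transpose_transpose, hSd.isSymm.eq, Matrix.mul_assoc]
  have hgram : Gᵀ * G = Θ * (Uᵀ * X)ᵀ * S * (1 - (Uᵀ * X) * (Uᵀ * X)ᵀ) * S * (Uᵀ * X) * Θ := by
    rw [transpose_mul_self_of_eq_neg_one_sub_mul_transpose hBsymm hX hG, ← hΘ, hB,
      transpose_mul_sandwich_one_sub_mul_transpose hU]
    simp only [Matrix.mul_assoc]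
  refine ⟨hgram, ?_⟩
  have hS : ‖S‖ ≤ 1 := (specNorm_eq_l2_opNorm S ▸ hS1).le
  have hX1 := l2_opNorm_le_one_of_transpose_mul_self_eq_one hX
  have hUt : ‖Uᵀ‖ ≤ 1 :=
    l2_opNorm_transpose U ▸ l2_opNorm_le_one_of_transpose_mul_self_eq_one hU
  have hΦ : ‖Uᵀ * X‖ ≤ 1 := l2_opNorm_mul_le_one hUt hX1
  have hΦt : ‖(Uᵀ * X)ᵀ‖ ≤ 1 := by rwa [l2_opNorm_transpose]
  have hΘ1 : ‖Θ‖ ≤ 1 := by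
    rw [hΘ, hB, show Xᵀ * (U * S * Uᵀ) * X = (Uᵀ * X)ᵀ * S * (Uᵀ * X) by
      rw [transpose_mul, transpose_transpose]; simp only [Matrix.mul_assoc]]
    exact l2_opNorm_mul_le_one (l2_opNorm_mul_le_one hΦt hS) hΦ
  rw [specNorm_eq_l2_opNorm, specNorm_eq_l2_opNorm, hgram]
  calc ‖Θ * (Uᵀ * X)ᵀ * S * (1 - (Uᵀ * X) * (Uᵀ * X)ᵀ) * S * (Uᵀ * X) * Θ‖
      = ‖(Θ * (Uᵀ * X)ᵀ * S) * (1 - (Uᵀ * X) * (Uᵀ * X)ᵀ) * (S * (Uᵀ * X) * Θ)‖ := by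
        simp only [Matrix.mul_assoc]
    _ ≤ ‖1 - (Uᵀ * X) * (Uᵀ * X)ᵀ‖ :=
        l2_opNorm_mul_mul_le _ (l2_opNorm_mul_le_one (l2_opNorm_mul_le_one hΘ1 hΦt) hS)
          (l2_opNorm_mul_le_one (l2_opNorm_mul_le_one hS hΦ) hΘ1)

/-- Symmetric case: `B = U Σ Uᵀ` symmetric PSD with compact SVD, `σ₁(Σ) = 1`,
`rank B = r_B ≤ r`, `X ∈ St(m,r)`, `Θ = Xᵀ B X`, `G = −(I − XXᵀ) B X Xᵀ B X`,
`Φ = Uᵀ X`. Then `GᵀG = Θ Φᵀ Σ (I − ΦΦᵀ) Σ Φ Θ` and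
`σ₁(GᵀG) ≤ σ₁(I − ΦΦᵀ)`. -/
theorem symmetric_grad_identity_and_bound {m r rB : ℕ} (hr : rB ≤ r)
    (U : Matrix (Fin m) (Fin rB) ℝ) (hU : Uᵀ * U = 1)
    (S : Matrix (Fin rB) (Fin rB) ℝ) (hSd : S.IsDiag) (hSpos : ∀ i, 0 < S i i)
    (hS1 : specNorm S = 1)
    (B : Matrix (Fin m) (Fin m) ℝ) (hB : B = U * S * Uᵀ) (hrank : B.rank = rB)
    (X : Matrix (Fin m) (Fin r) ℝ) (hX : Xᵀ * X = 1)
    (Θ : Matrix (Fin r) (Fin r) ℝ) (hΘ : Θ = Xᵀ * B * X)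
    (G : Matrix (Fin m) (Fin r) ℝ) (hG : G = -((1 - X * Xᵀ) * B * X * Xᵀ * B * X)) :
    Gᵀ * G = Θ * (Uᵀ * X)ᵀ * S * (1 - (Uᵀ * X) * (Uᵀ * X)ᵀ) * S * (Uᵀ * X) * Θ ∧
      specNorm (Gᵀ * G) ≤ specNorm (1 - (Uᵀ * X) * (Uᵀ * X)ᵀ) :=
  symmetric_grad_identity_and_bound_general U hU S hSd hS1 B hB X hX Θ hΘ G hG
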